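/- Let P be a naturally labeled forest with duplications, i.e., a naturally labeled finite poset on {1,…,n} such that for any connected order ideal J_a of P there exists at most one other connected order ideal J_b intersecting J_a nontrivially. Then every connected component of G_P has at most two vertices, and if a connected component of G_P has exactly two vertices, then both of them are principal order ideals of P. -/

import Mathlib

attribute [local instance] Classical.propDecidable

noncomputable section

open Finset

variable {n : ℕ}

/-- The comparability graph of the poset structure `P` on `Fin n`; for an order
ideal of `P`, connectivity of its induced subgraph in this graph agrees with
connectivity of the Hasse diagram. -/
def compGraph (P : PartialOrder (Fin n)) : SimpleGraph (Fin n) where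
  Adj i j := i ≠ j ∧ (P.le i j ∨ P.le j i)
  symm := by
    constructor
    intro i j h
    exact ⟨h.1.symm, h.2.symm⟩
  loopless := by
    constructor
    intro i h
    exact h.1 rfl

/-- `J` is an order ideal of the poset `P`. -/
def IsIdeal (P : PartialOrder (Fin n)) (J : Finset (Fin n)) : Prop :=
  ∀ i ∈ J, ∀ j : Fin n, P.le j i → j ∈ J

/-- The Hasse diagram of `J` as a subposet of `P` is a connected graph. -/
def JConn (P : PartialOrder (Fin n)) (J : Finset (Fin n)) : Prop :=
  ((compGraph P).induce (↑J : Set (Fin n))).Connected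

/-- `J` is a connected order ideal of `P`. -/
def IsConnIdeal (P : PartialOrder (Fin n)) (J : Finset (Fin n)) : Prop :=
  IsIdeal P J ∧ JConn P J

/-- The type of connected order ideals of `P` (the vertices of `G_P`). -/
abbrev ConnIdeal (P : PartialOrder (Fin n)) : Type :=
  {J : Finset (Fin n) // IsConnIdeal P J}

instance (P : PartialOrder (Fin n)) : Fintype (ConnIdeal P) := Fintype.ofFinite _

/-- `A` and `B` intersect nontrivially. -/
def Nontriv (A B : Finset (Fin n)) : Prop :=
  (A ∩ B).Nonempty ∧ ¬ A ⊆ B ∧ ¬ B ⊆ A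

/-- The graph `G_P` on the connected order ideals of `P`, with two ideals
adjacent iff they intersect nontrivially. -/
def GP (P : PartialOrder (Fin n)) : SimpleGraph (ConnIdeal P) where
  Adj A B := Nontriv A.1 B.1
  symm := by
    constructor
    intro A B h
    exact ⟨by rw [Finset.inter_comm]; exact h.1, h.2.2, h.2.1⟩
  loopless := by
    constructor
    intro A h
    exact h.2.1 (Finset.Subset.refl _)

instance (P : PartialOrder (Fin n)) : Fintype ((GP P).ConnectedComponent) :=
  Fintype.ofFinite _

instance (P : PartialOrder (Fin n)) : Fintype ((GP P).edgeSet) :=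
  Fintype.ofFinite _

/-- `s` is an independent set of the graph `G`. -/
def IsIndep {V : Type*} (G : SimpleGraph V) (s : Finset V) : Prop :=
  ∀ a ∈ s, ∀ b ∈ s, ¬ G.Adj a b

/-- `s` is a maximum independent set of the graph `G`. -/
def IsMaxIndep {V : Type*} (G : SimpleGraph V) (s : Finset V) : Prop :=
  IsIndep G s ∧ ∀ t : Finset V, IsIndep G t → t.card ≤ s.card

/-- `s` is a maximum independent set of the subgraph of `G` induced on the
vertex set `S` (e.g. on a connected component of `G`). -/
def IsMaxIndepOn {V : Type*} (G : SimpleGraph V) (S : Set V) (s : Finset V) : Prop :=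
  ↑s ⊆ S ∧ IsIndep G s ∧ ∀ t : Finset V, ↑t ⊆ S → IsIndep G t → t.card ≤ s.card

/-- `μ(M, J) = ⋃_{J' ∈ M, J' ⊊ J} J'`. -/
def mu (P : PartialOrder (Fin n)) (M : Finset (ConnIdeal P)) (J : Finset (Fin n)) :
    Finset (Fin n) :=
  (M.filter (fun J' => J'.1 ⊂ J)).biUnion (fun J' => J'.1)

/-- The strict order relation of the poset `F_M` associated with a maximum
independent set `M` of `G_P`: `i <_{F_M} j` iff `J_a ⊊ J_b` where `J_a, J_b ∈ M`
satisfy `J_a \ μ(M,J_a) = {i}` and `J_b \ μ(M,J_b) = {j}`. -/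
def FMlt (P : PartialOrder (Fin n)) (M : Finset (ConnIdeal P)) (i j : Fin n) : Prop :=
  ∃ Ja ∈ M, ∃ Jb ∈ M,
    Ja.1 \ mu P M Ja.1 = {i} ∧ Jb.1 \ mu P M Jb.1 = {j} ∧ Ja.1 ⊂ Jb.1

/-- The order relation of the poset `F_M`. -/
def FMle (P : PartialOrder (Fin n)) (M : Finset (ConnIdeal P)) (i j : Fin n) : Prop :=
  i = j ∨ FMlt P M i j

/-- Strict relation associated with the relation `le`. -/
def ltRel (le : Fin n → Fin n → Prop) (i j : Fin n) : Prop := le i j ∧ i ≠ j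

/-- `j` covers `i` in the order given by the relation `le`. -/
def CovRel (le : Fin n → Fin n → Prop) (i j : Fin n) : Prop :=
  ltRel le i j ∧ ∀ k : Fin n, ltRel le i k → ¬ ltRel le k j

/-- The principal order ideal `Λ_i = {j : j ≤ i}` of the order given by `le`. -/
def LamRel (le : Fin n → Fin n → Prop) (i : Fin n) : Finset (Fin n) :=
  Finset.univ.filter (fun j => le j i)

/-- The descent set of a forest order given by the relation `le`:
elements `i` whose parent (the element covering `i`) is smaller than `i`. -/
def DesRel (le : Fin n → Fin n → Prop) : Finset (Fin n) :=
  Finset.univ.filter (fun i => ∃ j : Fin n, CovRel le i j ∧ j < i)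

/-- `Des(M) = Des(F_M)`. -/
def DesM (P : PartialOrder (Fin n)) (M : Finset (ConnIdeal P)) : Finset (Fin n) :=
  DesRel (FMle P M)

/-- `Des(M_r, M)`. -/
def DesMr (P : PartialOrder (Fin n)) (Mr M : Finset (ConnIdeal P)) : Finset (Fin n) :=
  (DesM P M).filter (fun i => ∃ J ∈ Mr, J.1 \ mu P M J.1 = {i})

/-- `Des̄(M_r, M)`. -/
def DesBarMr (P : PartialOrder (Fin n)) (Mr M : Finset (ConnIdeal P)) :
    Finset (ConnIdeal P) :=
  Mr.filter (fun J => ∃ i ∈ DesMr P Mr M, J.1 \ mu P M J.1 = {i})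

/-- The relation `le` is (the order relation of) a `P`-forest: a partial order
whose Hasse diagram is a forest, all of whose principal order ideals are
connected order ideals of `P`, and such that for incomparable `i, j` the union
`Λ_i ∪ Λ_j` is a disconnected order ideal of `P`. -/
structure IsPForestRel (P : PartialOrder (Fin n)) (le : Fin n → Fin n → Prop) : Prop where
  refl : ∀ i, le i i
  trans : ∀ i j k, le i j → le j k → le i k
  antisymm : ∀ i j, le i j → le j i → i = j
  forest : ∀ i j k, CovRel le i j → CovRel le i k → j = k
  connIdeal : ∀ i, IsConnIdeal P (LamRel le i)
  disc : ∀ i j : Fin n, ¬ le i j → ¬ le j i →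
    IsIdeal P (LamRel le i ∪ LamRel le j) ∧ ¬ JConn P (LamRel le i ∪ LamRel le j)

/-- The principal order ideal `Λ_i^P` of `P`. -/
def PIdeal (P : PartialOrder (Fin n)) (i : Fin n) : Finset (Fin n) :=
  Finset.univ.filter (fun k => P.le k i)

/-- The generating set `gs(J)`: the maximal elements of `J` with respect to `P`. -/
def gsJ (P : PartialOrder (Fin n)) (J : Finset (Fin n)) : Finset (Fin n) :=
  J.filter (fun i => ∀ j ∈ J, ¬ P.lt i j)

/-- `P` is naturally labeled. -/
def NatLabeled (P : PartialOrder (Fin n)) : Prop :=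
  ∀ i j : Fin n, P.lt i j → i < j

/-- `U_max(M, J)`: the maximal members of `U(M,J) = {J' ∈ M : J' ⊊ J}`. -/
def Umax (P : PartialOrder (Fin n)) (M : Finset (ConnIdeal P)) (J : Finset (Fin n)) :
    Finset (ConnIdeal P) :=
  (M.filter (fun Ja => Ja.1 ⊂ J)).filter
    (fun Ja => ∀ Jb ∈ M, Jb.1 ⊂ J → Jb ≠ Ja → ¬ Ja.1 ⊂ Jb.1)

/-- The set of vertices of `G_P` which are principal order ideals of `P`. -/
def PIdealSet (P : PartialOrder (Fin n)) : Set (ConnIdeal P) :=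
  {A : ConnIdeal P | ∃ i : Fin n, A.1 = PIdeal P i}

/-- The graph `H_P`: the subgraph of `G_P` induced by the principal order ideals. -/
def HP (P : PartialOrder (Fin n)) : SimpleGraph (PIdealSet P) :=
  (GP P).induce (PIdealSet P)

/-- `f` is a `P`-partition. -/
def IsPPartition (P : PartialOrder (Fin n)) (f : Fin n → ℕ) : Prop :=
  (∀ i j : Fin n, P.lt i j → f j ≤ f i) ∧
  (∀ i j : Fin n, P.lt i j → j < i → f j < f i)

/-- The monomial `∏_{k ∈ J} x_k`. -/
def xJ (J : Finset (Fin n)) : MvPowerSeries (Fin n) ℚ :=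
  ∏ k ∈ J, MvPowerSeries.X k

/-- The set of linear extensions of `P`, viewed as permutations `w` of `Fin n`
(in positions `0, …, n-1`) such that `i < j` whenever `w i <_P w j`. -/
def LinExts (P : PartialOrder (Fin n)) : Finset (Equiv.Perm (Fin n)) :=
  Finset.univ.filter (fun w => ∀ i j : Fin n, P.lt (w i) (w j) → i < j)

/-- The major index of a permutation (with 1-indexed positions). -/
def maj (w : Equiv.Perm (Fin n)) : ℕ :=
  ∑ i ∈ Finset.univ.filter
      (fun i : Fin n => ∃ h : (i : ℕ) + 1 < n, w ⟨(i : ℕ) + 1, h⟩ < w i),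
    ((i : ℕ) + 1)

/-- The finset of maximum independent sets of the connected component `c` of `G_P`. -/
def MaxIndepsOn (P : PartialOrder (Fin n)) (c : (GP P).ConnectedComponent) :
    Finset (Finset (ConnIdeal P)) :=
  Finset.univ.filter (fun Mr : Finset (ConnIdeal P) => IsMaxIndepOn (GP P) c.supp Mr)
/-!
Since a connected order ideal meets at most one other one nontrivially, `G_P` has maximum
degree at most one, so its components are single vertices or single edges. If `A` and `B`
intersect nontrivially, a path inside the connected ideal `A` from `A ∩ B` to `A \ B` has an
edge `p < v` leaving the ideal `B`; then `Λ_v ⊆ A` also meets `B` nontrivially, and since `B`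
has only one such partner, `A = Λ_v`.
-/

namespace SimpleGraph

variable {V : Type*} {G : SimpleGraph V}

theorem Reachable.adj_of_subsingleton_neighborSet
    (hG : ∀ a, (G.neighborSet a).Subsingleton) {u v : V} (huv : G.Reachable u v)
    (hne : u ≠ v) : G.Adj u v := by
  obtain ⟨w⟩ := huv
  induction w with
  | nil => exact absurd rfl hne
  | @cons u x v hux _ ih =>
    by_cases hxv : x = v
    · exact hxv ▸ hux
    · exact absurd (hG x hux.symm (ih hxv)) hne

theorem ConnectedComponent.card_supp_le_two_of_subsingleton_neighborSet
    (hG : ∀ a, (G.neighborSet a).Subsingleton) (c : G.ConnectedComponent) :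
    Nat.card c.supp ≤ 2 := by
  obtain ⟨a, rfl⟩ := c.exists_rep
  have hsub : (G.connectedComponentMk a).supp ⊆ insert a (G.neighborSet a) := by
    intro b hb
    by_cases hba : b = a
    · exact Or.inl hba
    · exact Or.inr (((ConnectedComponent.exact hb).adj_of_subsingleton_neighborSet hG hba).symm)
  have hN : (G.neighborSet a).ncard ≤ 1 := (Set.ncard_le_one (hG a).finite).2 (hG a)
  calc Nat.card (G.connectedComponentMk a).supp
      ≤ Nat.card (insert a (G.neighborSet a) : Set V) :=
        Nat.card_mono ((hG a).finite.insert a) hsub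
    _ ≤ (G.neighborSet a).ncard + 1 := Set.ncard_insert_le _ _
    _ ≤ 2 := by omega

end SimpleGraph

variable {P : PartialOrder (Fin n)}

theorem mem_pIdeal {i k : Fin n} : k ∈ PIdeal P i ↔ P.le k i := by
  simp [PIdeal]

theorem isConnIdeal_pIdeal (i : Fin n) : IsConnIdeal P (PIdeal P i) := by
  have hi : i ∈ PIdeal P i := mem_pIdeal.2 (P.le_refl i)
  refine ⟨fun a ha j hj => mem_pIdeal.2 (P.le_trans _ _ _ hj (mem_pIdeal.1 ha)), ?_⟩
  have hreach : ∀ u : (↑(PIdeal P i) : Set (Fin n)),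
      ((compGraph P).induce (↑(PIdeal P i) : Set (Fin n))).Reachable u ⟨i, hi⟩ := by
    intro u
    by_cases hu : (u : Fin n) = i
    · rw [show u = ⟨i, hi⟩ from Subtype.ext hu]
    · exact SimpleGraph.Adj.reachable ⟨hu, Or.inl (mem_pIdeal.1 u.2)⟩
  exact { preconnected := fun u v => (hreach u).trans (hreach v).symm
          nonempty := ⟨⟨i, hi⟩⟩ }

theorem IsIdeal.pIdeal_subset {J : Finset (Fin n)} (hJ : IsIdeal P J) {i : Fin n} (hi : i ∈ J) :
    PIdeal P i ⊆ J :=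
  fun _ hk => hJ i hi _ (mem_pIdeal.1 hk)

theorem JConn.exists_le_of_nontriv {A B : Finset (Fin n)} (hA : JConn P A) (hB : IsIdeal P B)
    (hAB : (A ∩ B).Nonempty) (hAsub : ¬ A ⊆ B) :
    ∃ p ∈ B, ∃ v ∈ A, v ∉ B ∧ P.le p v := by
  obtain ⟨x, hx⟩ := hAB
  rw [Finset.mem_inter] at hx
  obtain ⟨a, haA, haB⟩ := Finset.not_subset.1 hAsub
  obtain ⟨w⟩ := hA.preconnected ⟨x, hx.1⟩ ⟨a, haA⟩
  obtain ⟨d, -, hdB, hdB'⟩ := w.exists_boundary_dart {z | (z : Fin n) ∈ B} hx.2 haB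
  obtain ⟨-, hle | hle⟩ := d.adj
  · exact ⟨_, hdB, _, d.snd.2, hdB', hle⟩
  · exact absurd (hB _ hdB _ hle) hdB'

theorem eq_pIdeal_of_nontriv
    (hdup : ∀ Ja Jb Jc : ConnIdeal P, Nontriv Ja.1 Jb.1 → Nontriv Ja.1 Jc.1 → Jb = Jc)
    {A B : ConnIdeal P} (hAB : Nontriv A.1 B.1) : ∃ i : Fin n, A.1 = PIdeal P i := by
  obtain ⟨hint, hAsub, hBsub⟩ := hAB
  obtain ⟨p, hpB, v, hvA, hvB, hpv⟩ := A.2.2.exists_le_of_nontriv B.2.1 hint hAsub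
  have hvsub : PIdeal P v ⊆ A.1 := A.2.1.pIdeal_subset hvA
  have hBv : Nontriv B.1 (PIdeal P v) :=
    ⟨⟨p, Finset.mem_inter.2 ⟨hpB, mem_pIdeal.2 hpv⟩⟩,
      fun h => hBsub (h.trans hvsub), fun h => hvB (h (mem_pIdeal.2 (P.le_refl v)))⟩
  have hBA : Nontriv B.1 A.1 := ⟨Finset.inter_comm A.1 B.1 ▸ hint, hBsub, hAsub⟩
  exact ⟨v, congrArg Subtype.val (hdup B A ⟨_, isConnIdeal_pIdeal v⟩ hBA hBv)⟩

theorem statement_16_general (n : ℕ) (P : PartialOrder (Fin n))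
    (hdup : ∀ Ja Jb Jc : ConnIdeal P,
      Nontriv Ja.1 Jb.1 → Nontriv Ja.1 Jc.1 → Jb = Jc)
    (c : (GP P).ConnectedComponent) :
    Nat.card c.supp ≤ 2 ∧
    ∀ A ∈ c.supp, ∀ B ∈ c.supp, A ≠ B →
      (∃ i : Fin n, A.1 = PIdeal P i) ∧ ∃ i : Fin n, B.1 = PIdeal P i := by
  have hdeg : ∀ A, ((GP P).neighborSet A).Subsingleton := fun A _ hB _ hC => hdup A _ _ hB hC
  refine ⟨c.card_supp_le_two_of_subsingleton_neighborSet hdeg, fun A hA B hB hne => ?_⟩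
  have hAB : (GP P).Adj A B :=
    (c.reachable_of_mem_supp hA hB).adj_of_subsingleton_neighborSet hdeg hne
  exact ⟨eq_pIdeal_of_nontriv hdup hAB, eq_pIdeal_of_nontriv hdup hAB.symm⟩

/-- from Section 3: if `P` is a naturally labeled forest with
duplications (every connected order ideal intersects at most one other
connected order ideal nontrivially), then every connected component of `G_P`
has at most two vertices, and when a component has two (distinct) vertices both
of them are principal order ideals of `P`. -/
theorem statement_16 (n : ℕ) (P : PartialOrder (Fin n)) (hnat : NatLabeled P)
    (hdup : ∀ Ja Jb Jc : ConnIdeal P,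
      Nontriv Ja.1 Jb.1 → Nontriv Ja.1 Jc.1 → Jb = Jc)
    (c : (GP P).ConnectedComponent) :
    Nat.card c.supp ≤ 2 ∧
    ∀ A ∈ c.supp, ∀ B ∈ c.supp, A ≠ B →
      (∃ i : Fin n, A.1 = PIdeal P i) ∧ ∃ i : Fin n, B.1 = PIdeal P i :=
  statement_16_general n P hdup c
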